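/- arXiv:2401.01185 — 4 statements merged into one kernel-verified Lean document; each statement's English description precedes it below -/
import Mathlib

section
/- Let N ≥ 2, and suppose v : [0,1] → ℝ is continuous, strictly increasing, weakly concave, with v(0)=0. Define β(θ) = (1/θ^{N-1}) ∫₀^θ (N-1) s^{N-2} v(s) ds. Then v(θ) − β(θ) ≤ v(θ)/N for all θ ∈ (0,1], and consequently ∫₀¹ (1/v(θ)) · (v(θ) − β(θ) − v(θ)/N) dθ ≤ 0, with strict inequality when v is strictly concave. -/
/-!
Concavity and `v 0 = 0` put `v` above its chord through the origin: `v s ≥ (s / θ) v θ` for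
`0 ≤ s ≤ θ`. The bid `β θ` is the mean of `v` under the density `(N - 1) s ^ (N - 2) / θ ^ (N - 1)`
on `[0, θ]`, under which `s / θ` has mean `(N - 1) / N`; hence `β θ ≥ (N - 1) / N · v θ`, strictly
if `v` is strictly concave. So the integrand is nonpositive, and since `β ≤ v` by monotonicity it
is bounded on `(0, 1]`, which gives the integrability the strict inequality needs.
-/

open MeasureTheory Set

section Chord

variable {v : ℝ → ℝ} {θ s : ℝ}

lemma ConcaveOn.div_mul_le_of_map_zero (hv : ConcaveOn ℝ (Icc 0 θ) v) (hv0 : v 0 = 0)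
    (hθ : 0 < θ) (hs : s ∈ Icc 0 θ) : s / θ * v θ ≤ v s := by
  have h := hv.2 (left_mem_Icc.2 hθ.le) (right_mem_Icc.2 hθ.le)
    (sub_nonneg.2 ((div_le_one hθ).2 hs.2)) (div_nonneg hs.1 hθ.le) (sub_add_cancel 1 _)
  simpa only [smul_zero, zero_add, smul_eq_mul, hv0, mul_zero, div_mul_cancel₀ s hθ.ne'] using h

lemma StrictConcaveOn.div_mul_lt_of_map_zero (hv : StrictConcaveOn ℝ (Icc 0 θ) v)
    (hv0 : v 0 = 0) (hs : s ∈ Ioo 0 θ) : s / θ * v θ < v s := by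
  have hθ : 0 < θ := hs.1.trans hs.2
  have h := hv.2 (left_mem_Icc.2 hθ.le) (right_mem_Icc.2 hθ.le) hθ.ne
    (sub_pos.2 ((div_lt_one hθ).2 hs.2)) (div_pos hs.1 hθ) (sub_add_cancel 1 _)
  simpa only [smul_zero, zero_add, smul_eq_mul, hv0, mul_zero, div_mul_cancel₀ s hθ.ne'] using h

end Chord

lemma integral_pow_mul_div_mul (k : ℕ) (θ c : ℝ) :
    ∫ s in (0:ℝ)..θ, s ^ k * (s / θ * c) = θ ^ (k + 1) / (k + 2) * c := by
  rcases eq_or_ne θ 0 with rfl | hθ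
  · simp
  have h : (fun s : ℝ => s ^ k * (s / θ * c)) = fun s => c / θ * s ^ (k + 1) := by
    funext s; ring
  rw [h, intervalIntegral.integral_const_mul, integral_pow]
  field_simp
  push_cast
  ring

lemma integral_pow_mul_const (k : ℕ) (θ c : ℝ) :
    ∫ s in (0:ℝ)..θ, s ^ k * c = θ ^ (k + 1) / (k + 1) * c := by
  rw [intervalIntegral.integral_mul_const, integral_pow]
  simp

section PowerWeightedIntegral

variable {v : ℝ → ℝ} {θ : ℝ}

lemma intervalIntegrable_pow_mul (k : ℕ) (hv : ContinuousOn v (Icc 0 θ)) (hθ : 0 ≤ θ) :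
    IntervalIntegrable (fun s => s ^ k * v s) volume 0 θ :=
  ((continuous_pow k).continuousOn.mul hv).intervalIntegrable_of_Icc hθ

lemma ConcaveOn.pow_div_mul_le_integral (k : ℕ) (hc : ContinuousOn v (Icc 0 θ))
    (hv : ConcaveOn ℝ (Icc 0 θ) v) (hv0 : v 0 = 0) (hθ : 0 < θ) :
    θ ^ (k + 1) / (k + 2) * v θ ≤ ∫ s in (0:ℝ)..θ, s ^ k * v s := by
  rw [← integral_pow_mul_div_mul]
  refine intervalIntegral.integral_mono_on hθ.le
    (Continuous.intervalIntegrable (by fun_prop) _ _) (intervalIntegrable_pow_mul k hc hθ.le)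
    fun s hs => ?_
  exact mul_le_mul_of_nonneg_left (hv.div_mul_le_of_map_zero hv0 hθ hs) (pow_nonneg hs.1 k)

lemma StrictConcaveOn.pow_div_mul_lt_integral (k : ℕ) (hc : ContinuousOn v (Icc 0 θ))
    (hv : StrictConcaveOn ℝ (Icc 0 θ) v) (hv0 : v 0 = 0) (hθ : 0 < θ) :
    θ ^ (k + 1) / (k + 2) * v θ < ∫ s in (0:ℝ)..θ, s ^ k * v s := by
  rw [← integral_pow_mul_div_mul]
  refine intervalIntegral.integral_lt_integral_of_continuousOn_of_le_of_exists_lt hθ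
    (by fun_prop) ((continuous_pow k).continuousOn.mul hc)
    (fun s hs => mul_le_mul_of_nonneg_left
      (hv.concaveOn.div_mul_le_of_map_zero hv0 hθ (Ioc_subset_Icc_self hs))
      (pow_nonneg hs.1.le k))
    ⟨θ / 2, ⟨by positivity, by linarith⟩, ?_⟩
  have hmid : θ / 2 ∈ Ioo 0 θ := ⟨by positivity, by linarith⟩
  exact mul_lt_mul_of_pos_left (hv.div_mul_lt_of_map_zero hv0 hmid) (by positivity)

lemma MonotoneOn.integral_pow_mul_le (k : ℕ) (hc : ContinuousOn v (Icc 0 θ))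
    (hv : MonotoneOn v (Icc 0 θ)) (hθ : 0 ≤ θ) :
    ∫ s in (0:ℝ)..θ, s ^ k * v s ≤ θ ^ (k + 1) / (k + 1) * v θ := by
  rw [← integral_pow_mul_const]
  refine intervalIntegral.integral_mono_on hθ (intervalIntegrable_pow_mul k hc hθ)
    (Continuous.intervalIntegrable (by fun_prop) _ _) fun s hs => ?_
  exact mul_le_mul_of_nonneg_left (hv hs (right_mem_Icc.2 hθ) hs.2) (pow_nonneg hs.1 k)

end PowerWeightedIntegral

noncomputable def firstPriceBid (N : ℕ) (v : ℝ → ℝ) (θ : ℝ) : ℝ :=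
  (1 / θ ^ (N - 1)) * ∫ s in (0:ℝ)..θ, ((N:ℝ) - 1) * s ^ (N - 2) * v s

section FirstPriceBid

variable {N : ℕ} {v : ℝ → ℝ} {b θ : ℝ}

lemma firstPriceBid_add_two (k : ℕ) (v : ℝ → ℝ) (θ : ℝ) :
    firstPriceBid (k + 2) v θ = (k + 1) / θ ^ (k + 1) * ∫ s in (0:ℝ)..θ, s ^ k * v s := by
  rw [firstPriceBid, show k + 2 - 1 = k + 1 by omega, show k + 2 - 2 = k by omega]
  simp_rw [mul_assoc, intervalIntegral.integral_const_mul]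
  push_cast
  ring

lemma sub_firstPriceBid_add_two_sub_div (k : ℕ) (v : ℝ → ℝ) (hθ : θ ≠ 0) :
    v θ - firstPriceBid (k + 2) v θ - v θ / ↑(k + 2) =
      (k + 1) / θ ^ (k + 1) * (θ ^ (k + 1) / (k + 2) * v θ - ∫ s in (0:ℝ)..θ, s ^ k * v s) := by
  rw [firstPriceBid_add_two]
  field_simp
  push_cast
  ring

lemma sub_firstPriceBid_le_div (hN : 2 ≤ N) (hc : ContinuousOn v (Icc 0 b))
    (hv : ConcaveOn ℝ (Icc 0 b) v) (hv0 : v 0 = 0) (hθ : θ ∈ Ioc 0 b) :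
    v θ - firstPriceBid N v θ ≤ v θ / N := by
  obtain ⟨k, rfl⟩ : ∃ k, N = k + 2 := ⟨N - 2, by omega⟩
  have hsub : Icc 0 θ ⊆ Icc 0 b := Icc_subset_Icc_right hθ.2
  rw [← sub_nonpos, sub_firstPriceBid_add_two_sub_div k v hθ.1.ne']
  refine mul_nonpos_of_nonneg_of_nonpos (by have := hθ.1; positivity) (sub_nonpos.2 ?_)
  exact (hv.subset hsub (convex_Icc 0 θ)).pow_div_mul_le_integral k (hc.mono hsub) hv0 hθ.1

lemma sub_firstPriceBid_lt_div (hN : 2 ≤ N) (hc : ContinuousOn v (Icc 0 b))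
    (hv : StrictConcaveOn ℝ (Icc 0 b) v) (hv0 : v 0 = 0) (hθ : θ ∈ Ioc 0 b) :
    v θ - firstPriceBid N v θ < v θ / N := by
  obtain ⟨k, rfl⟩ : ∃ k, N = k + 2 := ⟨N - 2, by omega⟩
  have hsub : Icc 0 θ ⊆ Icc 0 b := Icc_subset_Icc_right hθ.2
  rw [← sub_neg, sub_firstPriceBid_add_two_sub_div k v hθ.1.ne']
  refine mul_neg_of_pos_of_neg (by have := hθ.1; positivity) (sub_neg.2 ?_)
  exact (hv.subset hsub (convex_Icc 0 θ)).pow_div_mul_lt_integral k (hc.mono hsub) hv0 hθ.1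

lemma firstPriceBid_le (hN : 2 ≤ N) (hc : ContinuousOn v (Icc 0 b))
    (hv : MonotoneOn v (Icc 0 b)) (hθ : θ ∈ Ioc 0 b) : firstPriceBid N v θ ≤ v θ := by
  obtain ⟨k, rfl⟩ : ∃ k, N = k + 2 := ⟨N - 2, by omega⟩
  have hsub : Icc 0 θ ⊆ Icc 0 b := Icc_subset_Icc_right hθ.2
  have hθ0 := hθ.1
  calc firstPriceBid (k + 2) v θ
      ≤ (k + 1) / θ ^ (k + 1) * (θ ^ (k + 1) / (k + 1) * v θ) := by
        rw [firstPriceBid_add_two]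
        gcongr
        exact (hv.mono hsub).integral_pow_mul_le k (hc.mono hsub) hθ0.le
    _ = v θ := by field_simp

lemma continuousOn_firstPriceBid (hc : ContinuousOn v (Icc 0 b)) :
    ContinuousOn (firstPriceBid N v) (Ioc 0 b) := by
  intro θ hθ
  have hb : uIcc 0 b = Icc 0 b := uIcc_of_le (hθ.1.le.trans hθ.2)
  have hint : IntegrableOn (fun s => ((N:ℝ) - 1) * s ^ (N - 2) * v s) (uIcc 0 b) := by
    rw [hb]
    exact ((continuous_const.mul (continuous_pow _)).continuousOn.mul hc).integrableOn_Icc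
  have hprim := intervalIntegral.continuousOn_primitive_interval hint
  rw [hb] at hprim
  refine ContinuousOn.mul ?_ (hprim.mono Ioc_subset_Icc_self) θ hθ
  exact continuousOn_const.div (continuous_pow _).continuousOn fun x hx => pow_ne_zero _ hx.1.ne'

end FirstPriceBid

lemma ContinuousOn.intervalIntegrable_of_norm_le {E : Type*} [NormedAddCommGroup E]
    {f : ℝ → E} {a b C : ℝ} (hf : ContinuousOn f (Ioc a b)) (hC : ∀ x ∈ Ioc a b, ‖f x‖ ≤ C)
    (hab : a ≤ b) : IntervalIntegrable f volume a b := by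
  rw [intervalIntegrable_iff_integrableOn_Ioc_of_le hab]
  exact IntegrableOn.of_bound measure_Ioc_lt_top (hf.aestronglyMeasurable measurableSet_Ioc) C
    ((ae_restrict_iff' measurableSet_Ioc).2 (ae_of_all _ hC))

lemma intervalIntegral.integral_nonpos_of_nonpos_on {f : ℝ → ℝ} {a b : ℝ} (hab : a ≤ b)
    (hf : ∀ x ∈ Ioc a b, f x ≤ 0) : ∫ x in a..b, f x ≤ 0 := by
  rw [intervalIntegral.integral_of_le hab]
  exact setIntegral_nonpos measurableSet_Ioc hf

lemma intervalIntegral.integral_neg_of_neg_on {f : ℝ → ℝ} {a b : ℝ}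
    (hfi : IntervalIntegrable f volume a b) (hf : ∀ x ∈ Ioo a b, f x < 0) (hab : a < b) :
    ∫ x in a..b, f x < 0 := by
  simpa only [Pi.neg_apply, intervalIntegral.integral_neg, neg_pos] using
    intervalIntegral.intervalIntegral_pos_of_pos_on hfi.neg (fun x hx => neg_pos.2 (hf x hx)) hab

/-- For weakly concave, continuous, strictly increasing v with v(0)=0 and the first-price
equilibrium bid β(θ) = (1/θ^(N-1)) ∫₀^θ (N-1)s^(N-2) v(s) ds: v(θ) - β(θ) ≤ v(θ)/N on (0,1],
hence ∫₀¹ (1/v)(v - β - v/N) ≤ 0, strictly if v is strictly concave. -/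
theorem stmt10 (N : ℕ) (hN : 2 ≤ N) (v : ℝ → ℝ)
    (hv_cont : ContinuousOn v (Set.Icc 0 1))
    (hv_mono : StrictMonoOn v (Set.Icc 0 1))
    (hv_conc : ConcaveOn ℝ (Set.Icc 0 1) v)
    (hv0 : v 0 = 0)
    (β : ℝ → ℝ)
    (hβ : ∀ θ ∈ Set.Ioc (0:ℝ) 1,
      β θ = (1 / θ ^ (N - 1)) * ∫ s in (0:ℝ)..θ, ((N:ℝ) - 1) * s ^ (N - 2) * v s) :
    (∀ θ ∈ Set.Ioc (0:ℝ) 1, v θ - β θ ≤ v θ / N) ∧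
    (∫ θ in (0:ℝ)..1, (1 / v θ) * (v θ - β θ - v θ / N)) ≤ 0 ∧
    (StrictConcaveOn ℝ (Set.Icc 0 1) v →
      (∫ θ in (0:ℝ)..1, (1 / v θ) * (v θ - β θ - v θ / N)) < 0) := by
  have hβ : EqOn β (firstPriceBid N v) (Ioc 0 1) := hβ
  have hv_pos : ∀ θ ∈ Ioc (0:ℝ) 1, 0 < v θ := fun θ hθ =>
    hv0 ▸ hv_mono (left_mem_Icc.2 zero_le_one) (Ioc_subset_Icc_self hθ) hθ.1
  have hsurplus : ∀ θ ∈ Ioc (0:ℝ) 1, v θ - β θ ≤ v θ / N := fun θ hθ =>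
    hβ hθ ▸ sub_firstPriceBid_le_div hN hv_cont hv_conc hv0 hθ
  set g : ℝ → ℝ := fun θ => 1 / v θ * (v θ - β θ - v θ / N)
  refine ⟨hsurplus, intervalIntegral.integral_nonpos_of_nonpos_on zero_le_one fun θ hθ => ?_,
    fun hsc => ?_⟩
  · exact mul_nonpos_of_nonneg_of_nonpos (one_div_pos.2 (hv_pos θ hθ)).le
      (by linarith [hsurplus θ hθ])
  have hg_neg : ∀ θ ∈ Ioo (0:ℝ) 1, g θ < 0 := fun θ hθ => by
    have hθ' := Ioo_subset_Ioc_self hθ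
    have hlt := hβ hθ' ▸ sub_firstPriceBid_lt_div hN hv_cont hsc hv0 hθ'
    exact mul_neg_of_pos_of_neg (one_div_pos.2 (hv_pos θ hθ')) (by linarith)
  have hg_cont : ContinuousOn g (Ioc 0 1) := by
    have hvc := hv_cont.mono Ioc_subset_Icc_self
    have hβc := (continuousOn_firstPriceBid hv_cont).congr hβ
    exact (continuousOn_const.div hvc fun θ hθ => (hv_pos θ hθ).ne').mul
      ((hvc.sub hβc).sub (hvc.div_const _))
  have hg_le : ∀ θ ∈ Ioc (0:ℝ) 1, ‖g θ‖ ≤ 1 := fun θ hθ => by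
    have hβv := hβ hθ ▸ firstPriceBid_le hN hv_cont hv_mono.monotoneOn hθ
    have hvN : v θ / N ≤ v θ := div_le_self (hv_pos θ hθ).le (Nat.one_le_cast.2 (by omega))
    rw [Real.norm_eq_abs, abs_mul, abs_of_pos (one_div_pos.2 (hv_pos θ hθ)), one_div,
      inv_mul_le_one₀ (hv_pos θ hθ), abs_le]
    constructor <;> linarith [hsurplus θ hθ]
  exact intervalIntegral.integral_neg_of_neg_on
    (hg_cont.intervalIntegrable_of_norm_le hg_le zero_le_one) hg_neg one_pos
end

section
/- Let β : [0,1] → [0, β(1)] be continuous and strictly increasing with β(0) = 0 and λ : [0,1] → ℝ continuous and strictly increasing. For θ ∈ [0,1] define P(λ,θ) = λ^{-1}(β(θ)) if β(θ) ≤ λ(1) and P(λ,θ) = 1 otherwise. Then P is jointly continuous: for any λ, θ and ε > 0 there exist δ_λ, δ_θ > 0 such that for all continuous strictly increasing λ' with sup-norm distance ‖λ − λ'‖_∞ < δ_λ and all θ' ∈ [0,1] with |θ − θ'| < δ_θ, |P(λ,θ) − P(λ',θ')| < ε. -/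
/-!
Write `x = P(λ, θ)`. For `u < x < v` in `[0,1]` strict monotonicity of `λ` gives the strict gaps
`λ u < β θ < λ v`. A perturbation `λ'` that is uniformly close to `λ`, together with `β θ'` close
to `β θ` (continuity of `β`), keeps both gaps open, and monotonicity of `λ'` then traps
`P(λ', θ')` between `u` and `v`.
-/

open Set

/-- `x` solves `g x = b` in `[0,1]`, or is capped at `x = 1` when `b` exceeds `g 1`. -/
def IsCappedPreimage (g : ℝ → ℝ) (b x : ℝ) : Prop :=
  x ∈ Icc (0 : ℝ) 1 ∧ g x ≤ b ∧ (x < 1 → g x = b)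

namespace IsCappedPreimage

variable {g : ℝ → ℝ} {b x u v : ℝ}

theorem of_spec (h : (b ≤ g 1 → x ∈ Icc (0 : ℝ) 1 ∧ g x = b) ∧ (g 1 < b → x = 1)) :
    IsCappedPreimage g b x := by
  rcases le_or_gt b (g 1) with hb | hb
  · obtain ⟨hx, hgx⟩ := h.1 hb
    exact ⟨hx, hgx.le, fun _ => hgx⟩
  · obtain rfl := h.2 hb
    exact ⟨right_mem_Icc.2 zero_le_one, hb.le, fun h1 => absurd h1 (lt_irrefl 1)⟩

theorem le_of_apply_lt (hx : IsCappedPreimage g b x) (hg : MonotoneOn g (Icc 0 1))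
    (hu : u ∈ Icc (0 : ℝ) 1) (hgu : g u < b) : u ≤ x := by
  by_contra! hxu
  have hgx : g x = b := hx.2.2 (hxu.trans_le hu.2)
  linarith [hg hx.1 hu hxu.le]

theorem lt_of_lt_apply (hx : IsCappedPreimage g b x) (hg : MonotoneOn g (Icc 0 1))
    (hv : v ∈ Icc (0 : ℝ) 1) (hgv : b < g v) : x < v := by
  by_contra! hvx
  linarith [hg hv hx.1 hvx, hx.2.1]

theorem apply_lt_of_lt (hx : IsCappedPreimage g b x) (hg : StrictMonoOn g (Icc 0 1))
    (hu : u ∈ Icc (0 : ℝ) 1) (hux : u < x) : g u < b :=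
  (hg hu hx.1 hux).trans_le hx.2.1

theorem lt_apply_of_lt (hx : IsCappedPreimage g b x) (hg : StrictMonoOn g (Icc 0 1))
    (hv : v ∈ Icc (0 : ℝ) 1) (hxv : x < v) : b < g v :=
  hx.2.2 (hxv.trans_le hv.2) ▸ hg hx.1 hv hxv

theorem exists_sub_lt_of_near (hx : IsCappedPreimage g b x) (hg : StrictMonoOn g (Icc 0 1))
    {ε : ℝ} (hε : 0 < ε) :
    ∃ δ > 0, ∀ (g' : ℝ → ℝ) (b' y : ℝ), MonotoneOn g' (Icc 0 1) →
      (∀ t ∈ Icc (0 : ℝ) 1, |g t - g' t| < δ) → |b - b'| < δ →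
      IsCappedPreimage g' b' y → x - ε < y := by
  rcases lt_or_ge x ε with hxε | hεx
  · exact ⟨1, one_pos, fun g' b' y _ _ _ hy => by linarith [hy.1.1]⟩
  have hu : x - ε / 2 ∈ Icc (0 : ℝ) 1 := ⟨by linarith, by linarith [hx.1.2]⟩
  have hgap : g (x - ε / 2) < b := hx.apply_lt_of_lt hg hu (by linarith)
  refine ⟨(b - g (x - ε / 2)) / 2, by linarith, fun g' b' y hg' hgg' hbb' hy => ?_⟩
  have hg'u := abs_lt.1 (hgg' _ hu)
  have hb' := abs_lt.1 hbb'
  linarith [hy.le_of_apply_lt hg' hu (by linarith)]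

theorem exists_lt_add_of_near (hx : IsCappedPreimage g b x) (hg : StrictMonoOn g (Icc 0 1))
    {ε : ℝ} (hε : 0 < ε) :
    ∃ δ > 0, ∀ (g' : ℝ → ℝ) (b' y : ℝ), MonotoneOn g' (Icc 0 1) →
      (∀ t ∈ Icc (0 : ℝ) 1, |g t - g' t| < δ) → |b - b'| < δ →
      IsCappedPreimage g' b' y → y < x + ε := by
  rcases lt_or_ge (1 - x) ε with hxε | hεx
  · exact ⟨1, one_pos, fun g' b' y _ _ _ hy => by linarith [hy.1.2]⟩
  have hv : x + ε / 2 ∈ Icc (0 : ℝ) 1 := ⟨by linarith [hx.1.1], by linarith⟩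
  have hgap : b < g (x + ε / 2) := hx.lt_apply_of_lt hg hv (by linarith)
  refine ⟨(g (x + ε / 2) - b) / 2, by linarith, fun g' b' y hg' hgg' hbb' hy => ?_⟩
  have hg'v := abs_lt.1 (hgg' _ hv)
  have hb' := abs_lt.1 hbb'
  linarith [hy.lt_of_lt_apply hg' hv (by linarith)]

theorem exists_abs_sub_lt_of_near (hx : IsCappedPreimage g b x)
    (hg : StrictMonoOn g (Icc 0 1)) {ε : ℝ} (hε : 0 < ε) :
    ∃ δ > 0, ∀ (g' : ℝ → ℝ) (b' y : ℝ), MonotoneOn g' (Icc 0 1) →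
      (∀ t ∈ Icc (0 : ℝ) 1, |g t - g' t| < δ) → |b - b'| < δ →
      IsCappedPreimage g' b' y → |x - y| < ε := by
  obtain ⟨δ₁, hδ₁, hlow⟩ := hx.exists_sub_lt_of_near hg hε
  obtain ⟨δ₂, hδ₂, hhigh⟩ := hx.exists_lt_add_of_near hg hε
  refine ⟨min δ₁ δ₂, lt_min hδ₁ hδ₂, fun g' b' y hg' hgg' hbb' hy => abs_sub_lt_iff.2 ⟨?_, ?_⟩⟩
  · linarith [hlow g' b' y hg' (fun t ht => (hgg' t ht).trans_le (min_le_left _ _))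
      (hbb'.trans_le (min_le_left _ _)) hy]
  · linarith [hhigh g' b' y hg' (fun t ht => (hgg' t ht).trans_le (min_le_right _ _))
      (hbb'.trans_le (min_le_right _ _)) hy]

end IsCappedPreimage

theorem stmt15_general (β : ℝ → ℝ)
    (hβc : ContinuousOn β (Set.Icc 0 1))
    (P : (ℝ → ℝ) → ℝ → ℝ)
    (hP : ∀ g : ℝ → ℝ, ContinuousOn g (Set.Icc 0 1) → StrictMonoOn g (Set.Icc 0 1) →
      g 0 = 0 → ∀ θ ∈ Set.Icc (0:ℝ) 1,
        (β θ ≤ g 1 → P g θ ∈ Set.Icc (0:ℝ) 1 ∧ g (P g θ) = β θ) ∧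
        (g 1 < β θ → P g θ = 1)) :
    ∀ lam : ℝ → ℝ, ContinuousOn lam (Set.Icc 0 1) → StrictMonoOn lam (Set.Icc 0 1) →
      lam 0 = 0 →
    ∀ θ ∈ Set.Icc (0:ℝ) 1, ∀ ε > (0:ℝ),
      ∃ δl > (0:ℝ), ∃ δθ > (0:ℝ),
        ∀ lam' : ℝ → ℝ, ContinuousOn lam' (Set.Icc 0 1) →
          StrictMonoOn lam' (Set.Icc 0 1) → lam' 0 = 0 →
        ∀ θ' ∈ Set.Icc (0:ℝ) 1,
          (∀ t ∈ Set.Icc (0:ℝ) 1, |lam t - lam' t| < δl) → |θ - θ'| < δθ →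
          |P lam θ - P lam' θ'| < ε := by
  intro lam hc hm h0 θ hθ ε hε
  have hx := IsCappedPreimage.of_spec (hP lam hc hm h0 θ hθ)
  obtain ⟨δ, hδ, hnear⟩ := hx.exists_abs_sub_lt_of_near hm hε
  obtain ⟨δθ, hδθ, hβδ⟩ := Metric.continuousWithinAt_iff.1 (hβc θ hθ) δ hδ
  refine ⟨δ, hδ, δθ, hδθ, fun lam' hc' hm' h0' θ' hθ' hll hθθ => ?_⟩
  have hββ : |β θ - β θ'| < δ := by
    rw [abs_sub_comm, ← Real.dist_eq]
    exact hβδ hθ' (by rwa [Real.dist_eq, abs_sub_comm])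
  exact hnear lam' (β θ') (P lam' θ') hm'.monotoneOn hll hββ
    (IsCappedPreimage.of_spec (hP lam' hc' hm' h0' θ' hθ'))

/-- Lemma 4.3 (joint continuity of P(λ,θ)): β is continuous, strictly increasing,
normalised (β 0 = 0) on [0,1]; for every admissible (continuous, strictly increasing,
normalised) strategy g, P g θ is the inverse image λ⁻¹(β(θ)) when β(θ) ≤ g(1), and 1
otherwise.  Then P is jointly continuous in (λ,θ) for the sup-norm on strategies. -/
theorem stmt15 (β : ℝ → ℝ)
    (hβc : ContinuousOn β (Set.Icc 0 1)) (hβm : StrictMonoOn β (Set.Icc 0 1))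
    (hβ0 : β 0 = 0)
    (P : (ℝ → ℝ) → ℝ → ℝ)
    (hP : ∀ g : ℝ → ℝ, ContinuousOn g (Set.Icc 0 1) → StrictMonoOn g (Set.Icc 0 1) →
      g 0 = 0 → ∀ θ ∈ Set.Icc (0:ℝ) 1,
        (β θ ≤ g 1 → P g θ ∈ Set.Icc (0:ℝ) 1 ∧ g (P g θ) = β θ) ∧
        (g 1 < β θ → P g θ = 1)) :
    ∀ lam : ℝ → ℝ, ContinuousOn lam (Set.Icc 0 1) → StrictMonoOn lam (Set.Icc 0 1) →
      lam 0 = 0 →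
    ∀ θ ∈ Set.Icc (0:ℝ) 1, ∀ ε > (0:ℝ),
      ∃ δl > (0:ℝ), ∃ δθ > (0:ℝ),
        ∀ lam' : ℝ → ℝ, ContinuousOn lam' (Set.Icc 0 1) →
          StrictMonoOn lam' (Set.Icc 0 1) → lam' 0 = 0 →
        ∀ θ' ∈ Set.Icc (0:ℝ) 1,
          (∀ t ∈ Set.Icc (0:ℝ) 1, |lam t - lam' t| < δl) → |θ - θ'| < δθ →
          |P lam θ - P lam' θ'| < ε :=
  stmt15_general β hβc P hP
end

section
/- Let v : (0,1] → ℝ be strictly increasing, differentiable, positive, with 1/v having derivative bounded above by −c for some c > 0 (i.e., v'(θ)/v(θ)² ≥ c). Let D ≤ inf_{θ∈(0,1]} v'(θ)/((2N−3)v(θ)³) with N ≥ 2, and suppose β satisfies 0 ≤ β(θ) ≤ v(θ) and β'(θ) = (N−1)θ^{N−2}v(θ). Then for all 0 < θ⁻ ≤ θ⁺ ≤ 1: D·(β(θ⁺)(θ⁺)^{N−2} − β(θ⁻)(θ⁻)^{N−2}) ≤ 1/v(θ⁻) − 1/v(θ⁺). -/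
/-!
With `n = N - 2`, the claim says that `G θ = D β(θ) θⁿ + 1 / v(θ)` is antitone on `(0, 1]`.
Its derivative is `D K - v' / v²`, where `K = (β θⁿ)' = (n + 1) θ²ⁿ v + n β θⁿ⁻¹` lies in
`[0, (2n + 1) v]` because `0 ≤ β ≤ v` and `θ ≤ 1`. Since `v' ≥ 0` (`v` is monotone), the bound on
`D` gives `D K ≤ v' / ((2n + 1) v³) · (2n + 1) v = v' / v²`.
-/

open Set

lemma succ_mul_pow_mul_pow_add_le {n : ℕ} {θ w b : ℝ} (hθ0 : 0 ≤ θ) (hθ1 : θ ≤ 1)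
    (hb0 : 0 ≤ b) (hbw : b ≤ w) :
    (n + 1) * θ ^ n * w * θ ^ n + b * (n * θ ^ (n - 1)) ≤ (2 * n + 1) * w := by
  have hw : 0 ≤ w := hb0.trans hbw
  have hpow : θ ^ n * θ ^ n ≤ 1 := mul_le_one₀ (pow_le_one₀ hθ0 hθ1) (by positivity)
    (pow_le_one₀ hθ0 hθ1)
  have hpow' : b * θ ^ (n - 1) ≤ w :=
    (mul_le_of_le_one_right hb0 (pow_le_one₀ hθ0 hθ1)).trans hbw
  calc (n + 1) * θ ^ n * w * θ ^ n + b * (n * θ ^ (n - 1))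
      = (n + 1) * w * (θ ^ n * θ ^ n) + n * (b * θ ^ (n - 1)) := by ring
    _ ≤ (n + 1) * w * 1 + n * w := by gcongr
    _ = (2 * n + 1) * w := by ring

lemma mul_le_div_sq_of_le_mul_of_le_div {m K w w' D : ℝ} (hm : 0 < m) (hw : 0 < w)
    (hw' : 0 ≤ w') (hK0 : 0 ≤ K) (hK : K ≤ m * w) (hD : D ≤ w' / (m * w ^ 3)) :
    D * K ≤ w' / w ^ 2 := by
  rcases le_or_gt D 0 with hD0 | hD0
  · exact (mul_nonpos_of_nonpos_of_nonneg hD0 hK0).trans (by positivity)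
  calc D * K ≤ w' / (m * w ^ 3) * (m * w) := mul_le_mul hD hK hK0 (by positivity)
    _ = w' / w ^ 2 := by field_simp

theorem antitoneOn_mul_mul_pow_add_inv {n : ℕ} {v β : ℝ → ℝ} {D : ℝ}
    (hvd : ∀ θ ∈ Ioc (0:ℝ) 1, DifferentiableAt ℝ v θ)
    (hvpos : ∀ θ ∈ Ioc (0:ℝ) 1, 0 < v θ)
    (hβ' : ∀ θ ∈ Ioc (0:ℝ) 1, HasDerivAt β ((n + 1) * θ ^ n * v θ) θ)
    (hv' : ∀ θ ∈ Ioo (0:ℝ) 1, 0 ≤ deriv v θ)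
    (hβ : ∀ θ ∈ Ioo (0:ℝ) 1, 0 ≤ β θ ∧ β θ ≤ v θ)
    (hD : ∀ θ ∈ Ioo (0:ℝ) 1, D ≤ deriv v θ / ((2 * n + 1) * v θ ^ 3)) :
    AntitoneOn (fun θ ↦ D * (β θ * θ ^ n) + (v θ)⁻¹) (Ioc 0 1) := by
  set G' : ℝ → ℝ := fun θ ↦
    D * ((n + 1) * θ ^ n * v θ * θ ^ n + β θ * (n * θ ^ (n - 1))) + -deriv v θ / v θ ^ 2
  have hG : ∀ θ ∈ Ioc (0:ℝ) 1, HasDerivAt (fun θ ↦ D * (β θ * θ ^ n) + (v θ)⁻¹) (G' θ) θ :=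
    fun θ hθ ↦ (((hβ' θ hθ).mul (hasDerivAt_pow n θ)).const_mul D).add
      ((hvd θ hθ).hasDerivAt.inv (hvpos θ hθ).ne')
  refine antitoneOn_of_hasDerivWithinAt_nonpos (f' := G') (convex_Ioc 0 1)
    (fun θ hθ ↦ (hG θ hθ).continuousAt.continuousWithinAt) ?_ ?_
  · rw [interior_Ioc]
    exact fun θ hθ ↦ (hG θ (Ioo_subset_Ioc_self hθ)).hasDerivWithinAt
  rw [interior_Ioc]
  intro θ hθ
  obtain ⟨hβ0, hβv⟩ := hβ θ hθ
  have hθ0 := hθ.1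
  have hv := hvpos θ (Ioo_subset_Ioc_self hθ)
  have hK := succ_mul_pow_mul_pow_add_le (n := n) hθ0.le hθ.2.le hβ0 hβv
  have hDK := mul_le_div_sq_of_le_mul_of_le_div (by positivity) hv (hv' θ hθ) (by positivity) hK
    (hD θ hθ)
  simp only [G', neg_div]
  linarith

theorem stmt17_general (N : ℕ) (hN : 2 ≤ N) (v : ℝ → ℝ)
    (hvm : StrictMonoOn v (Set.Ioc 0 1))
    (hvd : ∀ θ ∈ Set.Ioc (0:ℝ) 1, DifferentiableAt ℝ v θ)
    (hvpos : ∀ θ ∈ Set.Ioc (0:ℝ) 1, 0 < v θ)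
    (D : ℝ) (hD : ∀ θ ∈ Set.Ioc (0:ℝ) 1, D ≤ deriv v θ / ((2*(N:ℝ)-3) * (v θ)^3))
    (β : ℝ → ℝ) (hβ0 : ∀ θ ∈ Set.Ioc (0:ℝ) 1, 0 ≤ β θ ∧ β θ ≤ v θ)
    (hβ' : ∀ θ ∈ Set.Ioc (0:ℝ) 1, HasDerivAt β (((N:ℝ)-1) * θ^(N-2) * v θ) θ) :
    ∀ θm θp : ℝ, 0 < θm → θm ≤ θp → θp ≤ 1 →
      D * (β θp * θp^(N-2) - β θm * θm^(N-2)) ≤ 1 / v θm - 1 / v θp := by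
  intro θm θp hθm hle hθp
  have hN1 : (N:ℝ) - 1 = (N - 2 : ℕ) + 1 := by push_cast [Nat.cast_sub hN]; ring
  have hN3 : 2 * (N:ℝ) - 3 = 2 * (N - 2 : ℕ) + 1 := by push_cast [Nat.cast_sub hN]; ring
  have hv' : ∀ θ ∈ Ioo (0:ℝ) 1, 0 ≤ deriv v θ := fun θ hθ ↦
    derivWithin_of_isOpen (f := v) isOpen_Ioo hθ ▸
      (hvm.monotoneOn.mono Ioo_subset_Ioc_self).derivWithin_nonneg
  have hG := antitoneOn_mul_mul_pow_add_inv hvd hvpos (fun θ hθ ↦ hN1 ▸ hβ' θ hθ) hv'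
    (fun θ hθ ↦ hβ0 θ (Ioo_subset_Ioc_self hθ))
    (fun θ hθ ↦ hN3 ▸ hD θ (Ioo_subset_Ioc_self hθ))
  have hGle := hG ⟨hθm, hle.trans hθp⟩ ⟨hθm.trans_le hle, hθp⟩ hle
  simp only [one_div] at hGle ⊢
  linarith

/-- Pointwise inequality at the heart of the all-pay transport lemma: if v is strictly
increasing, differentiable and positive on (0,1] with v'(θ)/v(θ)² ≥ c > 0, β satisfies
0 ≤ β ≤ v and β'(θ) = (N-1)θ^(N-2)v(θ), and D ≤ v'(θ)/((2N-3)v(θ)³) on (0,1], then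
D(β(θ⁺)(θ⁺)^(N-2) - β(θ⁻)(θ⁻)^(N-2)) ≤ 1/v(θ⁻) - 1/v(θ⁺) for 0 < θ⁻ ≤ θ⁺ ≤ 1. -/
theorem stmt17 (N : ℕ) (hN : 2 ≤ N) (v : ℝ → ℝ)
    (hvm : StrictMonoOn v (Set.Ioc 0 1))
    (hvd : ∀ θ ∈ Set.Ioc (0:ℝ) 1, DifferentiableAt ℝ v θ)
    (hvpos : ∀ θ ∈ Set.Ioc (0:ℝ) 1, 0 < v θ)
    (c : ℝ) (hc : 0 < c)
    (hbound : ∀ θ ∈ Set.Ioc (0:ℝ) 1, c ≤ deriv v θ / (v θ)^2)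
    (D : ℝ) (hD : ∀ θ ∈ Set.Ioc (0:ℝ) 1, D ≤ deriv v θ / ((2*(N:ℝ)-3) * (v θ)^3))
    (β : ℝ → ℝ) (hβ0 : ∀ θ ∈ Set.Ioc (0:ℝ) 1, 0 ≤ β θ ∧ β θ ≤ v θ)
    (hβ' : ∀ θ ∈ Set.Ioc (0:ℝ) 1, HasDerivAt β (((N:ℝ)-1) * θ^(N-2) * v θ) θ) :
    ∀ θm θp : ℝ, 0 < θm → θm ≤ θp → θp ≤ 1 →
      D * (β θp * θp^(N-2) - β θm * θm^(N-2)) ≤ 1 / v θm - 1 / v θp :=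
  stmt17_general N hN v hvm hvd hvpos D hD β hβ0 hβ'
end

section
/- Consider a two-buyer first-price auction of complete information where both buyers have value 1, bids in [0,1], uniform tie-breaking, and the winner pays their bid. Let both buyers submit identical bids b drawn from the distribution on [0, 1−1/e] with c.d.f. S(b) = e^{-1}/(1−b). Then for each buyer, the expected utility under this correlated distribution is at least the expected utility of any fixed unilateral deviation bid b' ∈ [0,1]; i.e., this correlated bid distribution is a coarse correlated equilibrium, while the unique Nash equilibrium has both buyers bidding 1. -/
/-! Under the common bid `b`, `E[1 - b] = ∫₀¹ S = e⁻¹ + e⁻¹ log e = 2/e`, so each buyer gets `1/e`.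
A deviation to `b'` wins only when `b ≤ b'` and then earns at most `(1 - b') S(b')`, which is
`1/e` because `S` is chosen so that `(1 - b) S(b)` is constant on the support.
For the Nash part: against a bid `c < 1`, slight overbids earn nearly `1 - c`, a payoff no bid
attains, so no best response exists; bidding `1` against `1` is optimal since nothing earns more
than `0`. -/

open MeasureTheory

/-- Utility of a buyer with value 1 bidding `mine` against opponent bid `other` in a
first-price auction with uniform tie-breaking. -/
noncomputable def fpUtil (mine other : ℝ) : ℝ :=
  if other < mine then 1 - mine else if mine = other then (1 - mine) / 2 else 0

open ProbabilityTheory Set Real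

section Payoff

variable {b c : ℝ}

lemma fpUtil_self (b : ℝ) : fpUtil b b = (1 - b) / 2 := by
  simp [fpUtil]

lemma fpUtil_nonneg (hb : b ≤ 1) (c : ℝ) : 0 ≤ fpUtil b c := by
  unfold fpUtil
  split_ifs <;> linarith

lemma fpUtil_le_indicator (hb : b ≤ 1) (c : ℝ) :
    fpUtil b c ≤ (Iic b).indicator (fun _ ↦ 1 - b) c := by
  unfold fpUtil
  simp only [indicator_apply, mem_Iic]
  split_ifs <;> linarith

lemma fpUtil_lt_one_sub (hc : c < 1) (b : ℝ) : fpUtil b c < 1 - c := by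
  unfold fpUtil
  split_ifs <;> linarith

lemma fpUtil_one_right (hb : b ≤ 1) : fpUtil b 1 = 0 := by
  unfold fpUtil
  split_ifs <;> linarith

end Payoff

section BestResponse

def IsBestResponse (b c : ℝ) : Prop :=
  ∀ b' ∈ Icc (0 : ℝ) 1, fpUtil b' c ≤ fpUtil b c

lemma isBestResponse_one_one : IsBestResponse 1 1 := fun b' hb' ↦ by
  rw [fpUtil_one_right hb'.2, fpUtil_one_right le_rfl]

lemma IsBestResponse.eq_one {b c : ℝ} (h : IsBestResponse b c) (hb : b ≤ 1)
    (hc : c ∈ Icc (0 : ℝ) 1) : c = 1 := by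
  by_contra hne
  have hc1 : c < 1 := lt_of_le_of_ne hc.2 hne
  set u := fpUtil b c
  have hu_lt : u < 1 - c := fpUtil_lt_one_sub hc1 b
  have hu_nonneg : 0 ≤ u := fpUtil_nonneg hb c
  have hdev : fpUtil ((c + 1 - u) / 2) c = 1 - (c + 1 - u) / 2 := if_pos (by linarith)
  have := h ((c + 1 - u) / 2) ⟨by linarith [hc.1], by linarith⟩
  linarith

lemma isBestResponse_pair_iff {b c : ℝ} (hb : b ∈ Icc (0 : ℝ) 1) (hc : c ∈ Icc (0 : ℝ) 1) :
    IsBestResponse b c ∧ IsBestResponse c b ↔ b = 1 ∧ c = 1 := by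
  constructor
  · rintro ⟨hbc, hcb⟩
    exact ⟨hcb.eq_one hc.2 hb, hbc.eq_one hb.2 hc⟩
  · rintro ⟨rfl, rfl⟩
    exact ⟨isBestResponse_one_one, isBestResponse_one_one⟩

end BestResponse

section Integrals

variable {μ : Measure ℝ} [IsProbabilityMeasure μ]

lemma integral_fpUtil_le {b : ℝ} (hb : b ≤ 1) : ∫ x, fpUtil b x ∂μ ≤ (1 - b) * cdf μ b := by
  calc ∫ x, fpUtil b x ∂μ ≤ ∫ x, (Iic b).indicator (fun _ ↦ 1 - b) x ∂μ :=
        integral_mono_of_nonneg (.of_forall (fpUtil_nonneg hb))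
          ((integrable_const _).indicator measurableSet_Iic) (.of_forall (fpUtil_le_indicator hb))
    _ = (1 - b) * cdf μ b := by
        rw [integral_indicator_const _ measurableSet_Iic, cdf_eq_real, smul_eq_mul, mul_comm]

lemma integral_one_sub_eq_intervalIntegral_cdf (h : ∀ᵐ x ∂μ, x ∈ Icc (0 : ℝ) 1) :
    ∫ x, (1 - x) ∂μ = ∫ u in (0 : ℝ)..1, cdf μ u := by
  have hint : Integrable (fun x : ℝ ↦ 1 - x) μ :=
    .of_bound (by fun_prop) 1 (h.mono fun x hx ↦ by
      rw [norm_eq_abs, abs_le]; constructor <;> linarith [hx.1, hx.2])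
  rw [hint.integral_eq_integral_Ioc_meas_le (M := 1) (h.mono fun x hx ↦ by simp [hx.2])
    (h.mono fun x hx ↦ by simp [hx.1]), ← intervalIntegral.integral_of_le zero_le_one]
  have hlevel : ∀ t : ℝ, {x : ℝ | t ≤ 1 - x} = Iic (1 - t) := fun t ↦ by
    ext x; exact le_sub_comm (a := t)
  simp only [hlevel, ← cdf_eq_real]
  simp [intervalIntegral.integral_comp_sub_left]

end Integrals

section SkewedDistribution

variable {μ : Measure ℝ} [IsProbabilityMeasure μ]
  (hsupp : μ (Icc 0 (1 - exp (-1)))ᶜ = 0)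
  (hcdf : ∀ b ∈ Ico 0 (1 - exp (-1)), (μ (Iic b)).toReal = exp (-1) / (1 - b))
include hsupp

lemma cdf_eq_one_of_le {u : ℝ} (hu : 1 - exp (-1) ≤ u) : cdf μ u = 1 := by
  have hnull : μ (Iic u)ᶜ = 0 :=
    measure_mono_null (fun x hx ↦ fun hx' ↦ hx (hx'.2.trans hu)) hsupp
  rw [cdf_eq_real, measureReal_def, (prob_compl_eq_zero_iff measurableSet_Iic).mp hnull,
    ENNReal.toReal_one]

include hcdf

lemma cdf_eq_of_mem_Icc {u : ℝ} (hu : u ∈ Icc 0 (1 - exp (-1))) :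
    cdf μ u = exp (-1) / (1 - u) := by
  rcases hu.2.lt_or_eq with hlt | rfl
  · rw [cdf_eq_real, measureReal_def, hcdf u ⟨hu.1, hlt⟩]
  · rw [cdf_eq_one_of_le hsupp le_rfl, sub_sub_cancel, div_self (exp_pos _).ne']

lemma intervalIntegral_cdf : ∫ u in (0 : ℝ)..1, cdf μ u = 2 * exp (-1) := by
  have he : exp (-1) < 1 := exp_lt_one_iff.mpr (by norm_num)
  have hc : (0 : ℝ) ≤ 1 - exp (-1) := by linarith
  rw [← intervalIntegral.integral_add_adjacent_intervals (b := 1 - exp (-1))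
    (monotone_cdf μ).intervalIntegrable (monotone_cdf μ).intervalIntegrable]
  have hlower : ∫ u in (0 : ℝ)..1 - exp (-1), cdf μ u = exp (-1) := by
    calc ∫ u in (0 : ℝ)..1 - exp (-1), cdf μ u
        = ∫ u in (0 : ℝ)..1 - exp (-1), exp (-1) * (1 - u)⁻¹ :=
          intervalIntegral.integral_congr fun u hu ↦ by
            rw [uIcc_of_le hc] at hu
            rw [cdf_eq_of_mem_Icc hsupp hcdf hu, div_eq_mul_inv]
      _ = exp (-1) * ∫ v in exp (-1)..1, v⁻¹ := by
          rw [intervalIntegral.integral_const_mul,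
            intervalIntegral.integral_comp_sub_left (fun v ↦ v⁻¹), sub_sub_cancel, sub_zero]
      _ = exp (-1) := by
          rw [integral_inv_of_pos (exp_pos _) one_pos, one_div, ← exp_neg, neg_neg, log_exp,
            mul_one]
  have hupper : ∫ u in 1 - exp (-1)..1, cdf μ u = exp (-1) := by
    calc ∫ u in 1 - exp (-1)..1, cdf μ u = ∫ u in 1 - exp (-1)..1, (1 : ℝ) :=
          intervalIntegral.integral_congr fun u hu ↦ by
            rw [uIcc_of_le (by linarith [exp_pos (-1)])] at hu
            exact cdf_eq_one_of_le hsupp hu.1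
      _ = exp (-1) := by simp
  rw [hlower, hupper]
  ring

lemma integral_fpUtil_self : ∫ x, fpUtil x x ∂μ = exp (-1) := by
  have hae : ∀ᵐ x ∂μ, x ∈ Icc 0 (1 - exp (-1)) := mem_ae_iff.mpr hsupp
  have hsupp01 : ∀ᵐ x ∂μ, x ∈ Icc (0 : ℝ) 1 :=
    hae.mono fun x hx ↦ ⟨hx.1, hx.2.trans (by linarith [exp_pos (-1)])⟩
  simp only [fpUtil_self]
  rw [integral_div, integral_one_sub_eq_intervalIntegral_cdf hsupp01,
    intervalIntegral_cdf hsupp hcdf]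
  ring

lemma one_sub_mul_cdf_le {b : ℝ} (hb : b ∈ Icc (0 : ℝ) 1) : (1 - b) * cdf μ b ≤ exp (-1) := by
  rcases lt_or_ge b (1 - exp (-1)) with hlt | hge
  · rw [cdf_eq_of_mem_Icc hsupp hcdf ⟨hb.1, hlt.le⟩,
      mul_div_cancel₀ _ (by linarith [exp_pos (-1)])]
  · calc (1 - b) * cdf μ b ≤ (1 - b) * 1 :=
          mul_le_mul_of_nonneg_left (cdf_le_one μ b) (by linarith [hb.2])
      _ ≤ exp (-1) := by linarith

end SkewedDistribution

/-- The complete-information two-buyer first-price auction with both values 1: if both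
buyers submit the identical bid b drawn from the distribution μ on [0, 1-1/e] with c.d.f.
S(b) = e⁻¹/(1-b), then no fixed unilateral deviation b' ∈ [0,1] improves a buyer's expected
utility (so the correlated distribution is a coarse correlated equilibrium), while the
unique (pure) Nash equilibrium has both buyers bidding 1. -/
theorem stmt19 (μ : Measure ℝ) [IsProbabilityMeasure μ]
    (hsupp : μ ((Set.Icc (0:ℝ) (1 - Real.exp (-1)))ᶜ) = 0)
    (hcdf : ∀ b ∈ Set.Ico (0:ℝ) (1 - Real.exp (-1)),
      (μ (Set.Iic b)).toReal = Real.exp (-1) / (1 - b)) :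
    (∀ b' ∈ Set.Icc (0:ℝ) 1,
      (∫ b, fpUtil b' b ∂μ) ≤ ∫ b, fpUtil b b ∂μ) ∧
    (∀ b₁ ∈ Set.Icc (0:ℝ) 1, ∀ b₂ ∈ Set.Icc (0:ℝ) 1,
      (((∀ b' ∈ Set.Icc (0:ℝ) 1, fpUtil b' b₂ ≤ fpUtil b₁ b₂) ∧
        (∀ b' ∈ Set.Icc (0:ℝ) 1, fpUtil b' b₁ ≤ fpUtil b₂ b₁)) ↔ (b₁ = 1 ∧ b₂ = 1))) := by
  refine ⟨fun b hb ↦ ?_, fun b₁ hb₁ b₂ hb₂ ↦ isBestResponse_pair_iff hb₁ hb₂⟩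
  calc ∫ x, fpUtil b x ∂μ ≤ (1 - b) * cdf μ b := integral_fpUtil_le hb.2
    _ ≤ exp (-1) := one_sub_mul_cdf_le hsupp hcdf hb
    _ = ∫ x, fpUtil x x ∂μ := (integral_fpUtil_self hsupp hcdf).symm
end
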